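/- Let β be a Parry number with Parry polynomial n*_β. If ξ is a beta-conjugate of β which is not an algebraic unit (i.e. |N(ξ)| ≥ 2, where N(ξ) is the algebraic norm of ξ), then its multiplicity ν_ξ as a root of n*_β satisfies ν_ξ ≤ (1/Log 2)·( Log H(n*_β) − Log |N(β)| ). -/

import Mathlib

open Polynomial

noncomputable section

/-- Iterates `T_β^j(1)` of the beta-transformation `T_β(x) = βx - ⌊βx⌋` at `1`. -/
def Titer (β : ℝ) : ℕ → ℝ
  | 0 => 1
  | j + 1 => Int.fract (β * Titer β j)

/-- The digits `t_i = ⌊β · T_β^{i-1}(1)⌋` for `i ≥ 1` (junk value `0` at `i = 0`). -/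
def tdigit (β : ℝ) : ℕ → ℤ
  | 0 => 0
  | i + 1 => ⌊β * Titer β i⌋

/-- The Parry polynomial of a simple Parry number with `d_β(1) = 0.t₁…t_m`. -/
def simpleParryPoly (β : ℝ) (m : ℕ) : Polynomial ℤ :=
  X ^ m - ∑ i ∈ Finset.Icc 1 m, C (tdigit β i) * X ^ (m - i)

/-- The Parry polynomial of a non-simple Parry number with preperiod `m`, period `p+1`. -/
def nonsimpleParryPoly (β : ℝ) (m p : ℕ) : Polynomial ℤ :=
  X ^ (m + p + 1) - ∑ i ∈ Finset.Icc 1 (m + p + 1), C (tdigit β i) * X ^ (m + p + 1 - i)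
    - X ^ m + ∑ i ∈ Finset.Icc 1 m, C (tdigit β i) * X ^ (m - i)

/-- `β` is a Parry number (non-integer, `> 1`, with eventually periodic digit sequence
`(t_i)`) and `P` is its Parry polynomial: either `β` is a simple Parry number with
`d_β(1) = 0.t₁…t_m` (`m` maximal with `t_m ≠ 0`), or `β` is a non-simple Parry number with
minimal preperiod length `m ≥ 0` and minimal period length `p+1 ≥ 1`. -/
def IsParryPolyOf (β : ℝ) (P : Polynomial ℤ) : Prop :=
  1 < β ∧ (∀ n : ℤ, (n : ℝ) ≠ β) ∧
  ((∃ m : ℕ, 1 ≤ m ∧ tdigit β m ≠ 0 ∧ (∀ i, m < i → tdigit β i = 0) ∧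
      P = simpleParryPoly β m) ∨
   ((∀ N : ℕ, ∃ i, N < i ∧ tdigit β i ≠ 0) ∧
    ∃ m p : ℕ,
      (∀ i, m + 1 ≤ i → tdigit β (i + (p + 1)) = tdigit β i) ∧
      (∀ q : ℕ, 0 < q → (∃ m', ∀ i, m' + 1 ≤ i → tdigit β (i + q) = tdigit β i) →
        p + 1 ≤ q) ∧
      (∀ m', m' < m → ¬ (∀ i, m' + 1 ≤ i → tdigit β (i + (p + 1)) = tdigit β i)) ∧
      P = nonsimpleParryPoly β m p))

/-- The height of an integer polynomial: the maximum modulus of its coefficients. -/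
def polyHeight (P : Polynomial ℤ) : ℝ :=
  (Finset.range (P.natDegree + 1)).sup' ⟨0, Finset.mem_range.mpr (Nat.succ_pos _)⟩
    fun j => |(P.coeff j : ℝ)|

/-- The absolute value of the algebraic norm of `x`: the product of the absolute values
of all the roots (the conjugates of `x`) of its minimal polynomial. -/
def algNormAbs (x : ℂ) : ℝ :=
  ((((minpoly ℚ x).map (algebraMap ℚ ℂ)).roots).map (fun z => ‖z‖)).prod

lemma Titer_nonneg (β : ℝ) : ∀ j, 0 ≤ Titer β j
  | 0 => zero_le_one
  | j + 1 => Int.fract_nonneg _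

lemma Titer_lt_one (β : ℝ) (j : ℕ) (hj : 1 ≤ j) : Titer β j < 1 := by
  obtain ⟨k, rfl⟩ : ∃ k, j = k + 1 := ⟨j - 1, by omega⟩
  exact Int.fract_lt_one _

lemma Titer_succ (β : ℝ) (n : ℕ) :
    Titer β (n + 1) = β * Titer β n - (tdigit β (n + 1) : ℝ) := by
  show Int.fract _ = _
  rw [Int.fract]
  rfl

lemma tdigit_nonneg {β : ℝ} (hβ : 0 < β) (i : ℕ) : 0 ≤ tdigit β i := by
  cases i with
  | zero => exact le_refl 0
  | succ n =>
      show (0:ℤ) ≤ ⌊β * Titer β n⌋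
      exact Int.le_floor.mpr (by simpa using mul_nonneg hβ.le (Titer_nonneg β n))

lemma Titer_eq (β : ℝ) (j : ℕ) :
    Titer β j = β ^ j - ∑ i ∈ Finset.Icc 1 j, (tdigit β i : ℝ) * β ^ (j - i) := by
  induction j with
  | zero => simp [Titer]
  | succ n ih =>
      rw [Titer_succ, ih, Finset.sum_Icc_succ_top (by omega : 1 ≤ n + 1)]
      rw [mul_sub, Finset.mul_sum]
      have h1 : β * β ^ n = β ^ (n+1) := (pow_succ' β n).symm
      have h2 : ∀ i ∈ Finset.Icc 1 n, β * ((tdigit β i : ℝ) * β ^ (n - i))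
          = (tdigit β i : ℝ) * β ^ (n + 1 - i) := by
        intro i hi
        simp only [Finset.mem_Icc] at hi
        have : n + 1 - i = (n - i) + 1 := by omega
        rw [this, pow_succ]
        ring
      rw [Finset.sum_congr rfl h2, h1]
      simp
      ring

lemma aeval_parry_sum (β : ℝ) (m : ℕ) :
    (aeval β (∑ i ∈ Finset.Icc 1 m, C (tdigit β i) * X ^ (m - i)) : ℝ)
      = ∑ i ∈ Finset.Icc 1 m, (tdigit β i : ℝ) * β ^ (m - i) := by
  rw [map_sum]
  refine Finset.sum_congr rfl fun i _ => ?_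
  simp

lemma aeval_simpleParryPoly (β : ℝ) (m : ℕ) :
    (aeval β (simpleParryPoly β m) : ℝ) = Titer β m := by
  rw [simpleParryPoly, map_sub, map_pow, aeval_X, aeval_parry_sum, Titer_eq]

lemma aeval_nonsimpleParryPoly (β : ℝ) (m p : ℕ) :
    (aeval β (nonsimpleParryPoly β m p) : ℝ) = Titer β (m + p + 1) - Titer β m := by
  rw [nonsimpleParryPoly, map_add, map_sub, map_sub, map_pow, map_pow, aeval_X,
    aeval_parry_sum, aeval_parry_sum, Titer_eq β (m+p+1), Titer_eq β m]
  ring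

lemma Titer_shift_simple {β : ℝ} (m : ℕ) (h0 : ∀ i, m < i → tdigit β i = 0) :
    ∀ k, Titer β (m + k) = β ^ k * Titer β m := by
  intro k
  induction k with
  | zero => simp
  | succ n ih =>
      have : Titer β (m + (n+1)) = β * Titer β (m + n) - (tdigit β (m + n + 1) : ℝ) := by
        have e : m + (n+1) = (m+n) + 1 := rfl
        rw [e, Titer_succ]
      rw [this, h0 (m+n+1) (by omega), ih]
      push_cast
      ring

lemma Titer_simple_eq_zero {β : ℝ} (hβ : 1 < β) (m : ℕ) (hm : 1 ≤ m)
    (h0 : ∀ i, m < i → tdigit β i = 0) : Titer β m = 0 := by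
  by_contra h
  have hpos : 0 < Titer β m := lt_of_le_of_ne (Titer_nonneg β m) (Ne.symm h)
  obtain ⟨n, hn⟩ := pow_unbounded_of_one_lt (Titer β m)⁻¹ hβ
  have h1 : 1 < β ^ n * Titer β m := by
    rw [← inv_lt_iff_one_lt_mul₀ hpos] at *
    · exact hn
  have h2 : Titer β (m + n) < 1 := Titer_lt_one β _ (by omega)
  rw [Titer_shift_simple m h0 n] at h2
  linarith

lemma Titer_shift_nonsimple {β : ℝ} (m p : ℕ)
    (hper : ∀ i, m + 1 ≤ i → tdigit β (i + (p + 1)) = tdigit β i) :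
    ∀ k, Titer β (m + p + 1 + k) - Titer β (m + k)
      = β ^ k * (Titer β (m + p + 1) - Titer β m) := by
  intro k
  induction k with
  | zero => simp
  | succ n ih =>
      have e1 : Titer β (m + p + 1 + (n+1))
          = β * Titer β (m + p + 1 + n) - (tdigit β (m + p + 1 + n + 1) : ℝ) := by
        have e : m + p + 1 + (n+1) = (m + p + 1 + n) + 1 := rfl
        rw [e, Titer_succ]
      have e2 : Titer β (m + (n+1)) = β * Titer β (m + n) - (tdigit β (m + n + 1) : ℝ) := by
        have e : m + (n+1) = (m + n) + 1 := rfl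
        rw [e, Titer_succ]
      have ed : tdigit β (m + p + 1 + n + 1) = tdigit β (m + n + 1) := by
        have := hper (m + n + 1) (by omega)
        have e : m + n + 1 + (p + 1) = m + p + 1 + n + 1 := by omega
        rw [e] at this
        exact this
      rw [e1, e2, ed]
      have : β * Titer β (m+p+1+n) - (tdigit β (m+n+1) : ℝ)
          - (β * Titer β (m+n) - (tdigit β (m+n+1) : ℝ))
          = β * (Titer β (m+p+1+n) - Titer β (m+n)) := by ring
      rw [this, ih, pow_succ]
      ring

lemma Titer_nonsimple_eq {β : ℝ} (hβ : 1 < β) (m p : ℕ)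
    (hper : ∀ i, m + 1 ≤ i → tdigit β (i + (p + 1)) = tdigit β i) :
    Titer β (m + p + 1) = Titer β m := by
  by_contra h
  set c : ℝ := Titer β (m + p + 1) - Titer β m with hc
  have hcne : c ≠ 0 := sub_ne_zero.mpr h
  have hcpos : 0 < |c| := abs_pos.mpr hcne
  obtain ⟨n, hn⟩ := pow_unbounded_of_one_lt |c|⁻¹ hβ
  have h1 : 1 < β ^ n * |c| := by
    rw [← inv_lt_iff_one_lt_mul₀ hcpos]
    exact hn
  have hβpos : (0:ℝ) < β := lt_trans one_pos hβ
  have h1' : 1 < β ^ (n+1) * |c| := by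
    have : β ^ n * |c| ≤ β ^ (n+1) * |c| := by
      have : β ^ n ≤ β ^ (n+1) := pow_le_pow_right₀ hβ.le (by omega)
      nlinarith
    linarith
  have hk := Titer_shift_nonsimple m p hper (n+1)
  have hb1 : Titer β (m + p + 1 + (n+1)) < 1 := Titer_lt_one β _ (by omega)
  have hb2 : 0 ≤ Titer β (m + p + 1 + (n+1)) := Titer_nonneg β _
  have hb3 : Titer β (m + (n+1)) < 1 := Titer_lt_one β _ (by omega)
  have hb4 : 0 ≤ Titer β (m + (n+1)) := Titer_nonneg β _
  have habs : |β ^ (n+1) * c| < 1 := by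
    rw [← hk]
    rw [abs_lt]
    constructor <;> linarith
  rw [abs_mul, abs_of_pos (pow_pos hβpos _)] at habs
  linarith

lemma degree_parry_sum_lt (β : ℝ) (m n : ℕ) (hmn : m ≤ n) (hn : 1 ≤ n) :
    (∑ i ∈ Finset.Icc 1 m, C (tdigit β i) * X ^ (m - i)).degree < ((n : ℕ) : WithBot ℕ) := by
  apply lt_of_le_of_lt (Polynomial.degree_sum_le _ _)
  rw [Finset.sup_lt_iff (by exact_mod_cast WithBot.bot_lt_coe n)]
  intro i hi
  simp only [Finset.mem_Icc] at hi
  apply lt_of_le_of_lt (degree_C_mul_X_pow_le _ _)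
  exact_mod_cast Nat.lt_of_lt_of_le (by omega) hmn

lemma monic_simpleParryPoly (β : ℝ) (m : ℕ) (hm : 1 ≤ m) :
    (simpleParryPoly β m).Monic :=
  monic_X_pow_sub (degree_parry_sum_lt β m m le_rfl hm)

lemma nonsimple_eq (β : ℝ) (m p : ℕ) :
    nonsimpleParryPoly β m p = X ^ (m + p + 1) -
      ((∑ i ∈ Finset.Icc 1 (m + p + 1), C (tdigit β i) * X ^ (m + p + 1 - i))
        + X ^ m - ∑ i ∈ Finset.Icc 1 m, C (tdigit β i) * X ^ (m - i)) := by
  rw [nonsimpleParryPoly]; ring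

lemma monic_nonsimpleParryPoly (β : ℝ) (m p : ℕ) :
    (nonsimpleParryPoly β m p).Monic := by
  rw [nonsimple_eq]
  apply monic_X_pow_sub
  have hN : ((m + p : ℕ) : WithBot ℕ) < ((m + p + 1 : ℕ) : WithBot ℕ) := by
    exact_mod_cast Nat.lt_succ_self _
  have hlt : ∀ q : Polynomial ℤ, q.degree < ((m + p + 1 : ℕ) : WithBot ℕ) →
      q.degree ≤ ((m + p : ℕ) : WithBot ℕ) := by
    intro q hq
    rcases hd : q.degree with _ | d
    · exact bot_le
    · rw [hd] at hq
      rw [WithBot.some_eq_coe, Nat.cast_withBot] at hq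
      rw [WithBot.some_eq_coe, Nat.cast_withBot]
      have h1 : d < m + p + 1 := WithBot.coe_lt_coe.mp hq
      exact WithBot.coe_le_coe.mpr (by omega)
  have hle : (∑ i ∈ Finset.Icc 1 (m + p + 1), C (tdigit β i) * X ^ (m + p + 1 - i) + X ^ m -
        ∑ i ∈ Finset.Icc 1 m, C (tdigit β i) * X ^ (m - i)).degree ≤ ((m + p : ℕ) : WithBot ℕ) := by
    apply le_trans (degree_sub_le _ _)
    rw [max_le_iff]
    constructor
    · apply le_trans (degree_add_le _ _)
      rw [max_le_iff]
      refine ⟨hlt _ (degree_parry_sum_lt β _ _ le_rfl (by omega)), ?_⟩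
      rw [degree_X_pow]
      exact_mod_cast (by omega : m ≤ m + p)
    · exact hlt _ (degree_parry_sum_lt β m (m+p+1) (by omega) (by omega))
  exact lt_of_le_of_lt hle (by exact_mod_cast Nat.lt_succ_self (m+p))

lemma coeff_zero_parry_sum (β : ℝ) (m : ℕ) (hm : 1 ≤ m) :
    (∑ i ∈ Finset.Icc 1 m, C (tdigit β i) * X ^ (m - i)).coeff 0 = tdigit β m := by
  rw [finset_sum_coeff]
  rw [Finset.sum_eq_single m]
  · simp
  · intro i hi hne
    simp only [Finset.mem_Icc] at hi
    rw [coeff_C_mul, coeff_X_pow, if_neg (by omega), mul_zero]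
  · intro h
    exact absurd (Finset.mem_Icc.mpr ⟨hm, le_rfl⟩) h

lemma coeff_zero_simple (β : ℝ) (m : ℕ) (hm : 1 ≤ m) :
    (simpleParryPoly β m).coeff 0 = - tdigit β m := by
  rw [simpleParryPoly, coeff_sub, coeff_X_pow, if_neg (by omega), coeff_zero_parry_sum β m hm]
  ring

lemma coeff_zero_nonsimple_pos (β : ℝ) (m p : ℕ) (hm : 1 ≤ m) :
    (nonsimpleParryPoly β m p).coeff 0 = tdigit β m - tdigit β (m + p + 1) := by
  rw [nonsimpleParryPoly, coeff_add, coeff_sub, coeff_sub, coeff_X_pow, coeff_X_pow,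
    if_neg (by omega), if_neg (by omega), coeff_zero_parry_sum β _ (by omega : 1 ≤ m + p + 1),
    coeff_zero_parry_sum β m hm]
  ring

lemma coeff_zero_nonsimple_zero (β : ℝ) (p : ℕ) :
    (nonsimpleParryPoly β 0 p).coeff 0 = - tdigit β (p + 1) - 1 := by
  rw [nonsimpleParryPoly, coeff_add, coeff_sub, coeff_sub, coeff_X_pow, coeff_X_pow]
  simp only [Finset.Icc_self, zero_add]
  rw [if_neg (by omega), coeff_zero_parry_sum β _ (by omega : 1 ≤ p + 1)]
  have : (∑ i ∈ Finset.Icc 1 0, C (tdigit β i) * X ^ (0 - i)) = 0 := by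
    rw [show Finset.Icc 1 0 = (∅ : Finset ℕ) by rfl, Finset.sum_empty]
  rw [this]
  simp

lemma rootMultiplicity_minpoly_eq_one {ξ : ℂ} (hξ : IsIntegral ℚ ξ) :
    rootMultiplicity ξ ((minpoly ℚ ξ).map (algebraMap ℚ ℂ)) = 1 := by
  have hne : (minpoly ℚ ξ).map (algebraMap ℚ ℂ) ≠ 0 :=
    Polynomial.map_ne_zero (minpoly.ne_zero hξ)
  have hroot : ((minpoly ℚ ξ).map (algebraMap ℚ ℂ)).IsRoot ξ := by
    rw [IsRoot, eval_map, ← aeval_def, minpoly.aeval]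
  have hsq : Squarefree ((minpoly ℚ ξ).map (algebraMap ℚ ℂ)) :=
    ((minpoly.irreducible hξ).separable.map).squarefree
  have h1 : 1 ≤ rootMultiplicity ξ ((minpoly ℚ ξ).map (algebraMap ℚ ℂ)) :=
    (rootMultiplicity_pos hne).mpr hroot
  by_contra h
  have h2 : 2 ≤ rootMultiplicity ξ ((minpoly ℚ ξ).map (algebraMap ℚ ℂ)) := by omega
  have hdvd : (X - C ξ) * (X - C ξ) ∣ (minpoly ℚ ξ).map (algebraMap ℚ ℂ) := by
    have := pow_rootMultiplicity_dvd ((minpoly ℚ ξ).map (algebraMap ℚ ℂ)) ξ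
    calc (X - C ξ) * (X - C ξ) = (X - C ξ) ^ 2 := (sq _).symm
    _ ∣ (X - C ξ) ^ rootMultiplicity ξ ((minpoly ℚ ξ).map (algebraMap ℚ ℂ)) :=
        pow_dvd_pow _ h2
    _ ∣ _ := this
  exact (Polynomial.not_isUnit_X_sub_C ξ) (hsq _ hdvd)

lemma pow_minpoly_dvd (ξ : ℂ) (hξ : IsIntegral ℚ ξ) :
    ∀ n : ℕ, ∀ Q : Polynomial ℚ, Q ≠ 0 →
      rootMultiplicity ξ (Q.map (algebraMap ℚ ℂ)) = n → (minpoly ℚ ξ) ^ n ∣ Q := by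
  intro n
  induction n with
  | zero => intro Q _ _; simpa using one_dvd Q
  | succ k ih =>
      intro Q hQ hrm
      have hQm : Q.map (algebraMap ℚ ℂ) ≠ 0 := Polynomial.map_ne_zero hQ
      have hroot : (Q.map (algebraMap ℚ ℂ)).IsRoot ξ :=
        (rootMultiplicity_pos hQm).mp (by omega)
      have haev : aeval ξ Q = 0 := by
        rw [aeval_def, ← eval_map]; exact hroot
      obtain ⟨R, hR⟩ := minpoly.dvd ℚ ξ haev
      have hRne : R ≠ 0 := by
        rintro rfl; rw [mul_zero] at hR; exact hQ hR
      have hmul : rootMultiplicity ξ (Q.map (algebraMap ℚ ℂ))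
          = 1 + rootMultiplicity ξ (R.map (algebraMap ℚ ℂ)) := by
        rw [hR, Polynomial.map_mul, rootMultiplicity_mul, rootMultiplicity_minpoly_eq_one hξ]
        rw [← Polynomial.map_mul, ← hR]
        exact hQm
      have hRk : rootMultiplicity ξ (R.map (algebraMap ℚ ℂ)) = k := by omega
      rw [hR, pow_succ']
      exact mul_dvd_mul_left _ (ih R hRne hRk)

lemma algNormAbs_eq_abs_coeff_zero (x : ℂ) (hx : IsIntegral ℚ x) :
    ((((minpoly ℚ x).map (algebraMap ℚ ℂ)).roots).map (fun z => ‖z‖)).prod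
      = |((minpoly ℚ x).coeff 0 : ℚ)| := by
  set q := (minpoly ℚ x).map (algebraMap ℚ ℂ) with hq
  have hmo : q.Monic := (minpoly.monic hx).map _
  have hsp : q.Splits := IsAlgClosed.splits _
  have hc := hsp.coeff_zero_eq_prod_roots_of_monic hmo
  have h1 : (q.roots.map (fun z => ‖z‖)).prod = ‖q.roots.prod‖ := by
    exact (map_multiset_prod (normHom : ℂ →*₀ ℝ) _).symm
  rw [h1]
  have h2 : ‖q.roots.prod‖ = ‖q.coeff 0‖ := by
    rw [hc]
    rw [norm_mul]
    have : ‖((-1 : ℂ) ^ q.natDegree)‖ = 1 := by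
      rw [norm_pow]
      simp
    rw [this, one_mul]
  rw [h2, hq, coeff_map]
  have h3 : (algebraMap ℚ ℂ) ((minpoly ℚ x).coeff 0) = (((minpoly ℚ x).coeff 0 : ℝ) : ℂ) := by
    push_cast
    rfl
  rw [h3, Complex.norm_real, Real.norm_eq_abs]
  exact_mod_cast rfl

lemma master (β : ℝ) (P : Polynomial ℤ) (hβ1 : 1 < β) (hmonic : P.Monic)
    (hPβ : Polynomial.aeval β P = 0) (hP0 : P.coeff 0 ≠ 0) (ξ : ℂ)
    (hroot : (P.map (Int.castRingHom ℂ)).IsRoot ξ)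
    (hnotconj : (Polynomial.aeval ξ) (minpoly ℚ β) ≠ 0)
    (hnotunit : 2 ≤ algNormAbs ξ) :
    ((Polynomial.rootMultiplicity ξ (P.map (Int.castRingHom ℂ))) : ℝ) ≤
      (1 / Real.log 2) * (Real.log (polyHeight P) - Real.log (algNormAbs (β : ℂ))) := by
  have hβint : IsIntegral ℤ β := ⟨P, hmonic, by rwa [← aeval_def]⟩
  have hξint : IsIntegral ℤ ξ := ⟨P, hmonic, by
    rw [← algebraMap_int_eq] at hroot
    rw [← eval_map]; exact hroot⟩
  have hξintQ : IsIntegral ℚ ξ := hξint.tower_top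
  have hβintQ : IsIntegral ℚ β := hβint.tower_top
  have hAQ : minpoly ℚ ξ = (minpoly ℤ ξ).map (algebraMap ℤ ℚ) :=
    minpoly.isIntegrallyClosed_eq_field_fractions ℚ ℂ hξint
  have hBQ : minpoly ℚ β = (minpoly ℤ β).map (algebraMap ℤ ℚ) :=
    minpoly.isIntegrallyClosed_eq_field_fractions ℚ ℝ hβint
  set ν := Polynomial.rootMultiplicity ξ (P.map (Int.castRingHom ℂ)) with hν
  set Pq : Polynomial ℚ := P.map (algebraMap ℤ ℚ) with hPq
  have hPqmonic : Pq.Monic := hmonic.map _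
  have hPqne : Pq ≠ 0 := hPqmonic.ne_zero
  have hmapmap : P.map (Int.castRingHom ℂ) = Pq.map (algebraMap ℚ ℂ) := by
    rw [hPq, map_map]
    congr 1
  have hdvdA : (minpoly ℚ ξ) ^ ν ∣ Pq :=
    pow_minpoly_dvd ξ hξintQ ν Pq hPqne (by rw [← hmapmap])
  have hdvdB : minpoly ℚ β ∣ Pq :=
    minpoly.dvd ℚ β (by rw [hPq, aeval_map_algebraMap]; exact hPβ)
  have hAirr := minpoly.irreducible hξintQ
  have hBirr := minpoly.irreducible hβintQ
  have hnd : ¬ (minpoly ℚ β ∣ minpoly ℚ ξ) := by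
    intro hdvd
    have hassoc : Associated (minpoly ℚ β) (minpoly ℚ ξ) :=
      hBirr.associated_of_dvd hAirr hdvd
    obtain ⟨c, hcm⟩ := hassoc.symm.dvd
    apply hnotconj
    rw [hcm, map_mul, minpoly.aeval, zero_mul]
  have hcop : IsCoprime ((minpoly ℚ ξ) ^ ν) (minpoly ℚ β) :=
    ((hBirr.coprime_iff_not_dvd.mpr hnd).symm).pow_left
  have hdvdQ : (minpoly ℚ ξ) ^ ν * (minpoly ℚ β) ∣ Pq := hcop.mul_dvd hdvdA hdvdB
  have hMmonic : ((minpoly ℤ ξ) ^ ν * (minpoly ℤ β)).Monic :=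
    ((minpoly.monic hξint).pow _).mul (minpoly.monic hβint)
  have hdvdZ : (minpoly ℤ ξ) ^ ν * (minpoly ℤ β) ∣ P := by
    apply hmonic.dvd_of_fraction_map_dvd_fraction_map (K := ℚ) hMmonic
    rw [Polynomial.map_mul, Polynomial.map_pow, ← hAQ, ← hBQ]
    exact hdvdQ
  obtain ⟨S, hS⟩ := hdvdZ
  set A0 : ℤ := (minpoly ℤ ξ).coeff 0 with hA0
  set B0 : ℤ := (minpoly ℤ β).coeff 0 with hB0
  have hc : P.coeff 0 = A0 ^ ν * B0 * S.coeff 0 := by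
    rw [coeff_zero_eq_eval_zero, hS]
    simp only [eval_mul, eval_pow]
    rw [hA0, hB0, coeff_zero_eq_eval_zero, coeff_zero_eq_eval_zero, coeff_zero_eq_eval_zero]
  have hA0ne : A0 ≠ 0 := by
    intro h; apply hP0; rw [hc, h]
    rcases Nat.eq_zero_or_pos ν with hν0 | hν0
    · exfalso
      -- ν ≥ 1 since ξ is a root
      have : 0 < ν := by
        rw [hν]
        apply (rootMultiplicity_pos ?_).mpr hroot
        rw [hmapmap]
        exact Polynomial.map_ne_zero hPqne
      omega
    · rw [zero_pow (by omega), zero_mul, zero_mul]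
  have hB0ne : B0 ≠ 0 := by
    intro h; apply hP0; rw [hc, h, mul_zero, zero_mul]
  have hS0ne : S.coeff 0 ≠ 0 := by
    intro h; apply hP0; rw [hc, h, mul_zero]
  have keyZ : |A0| ^ ν * |B0| ≤ |P.coeff 0| := by
    rw [hc, abs_mul, abs_mul, abs_pow]
    have h1 : (1:ℤ) ≤ |S.coeff 0| := Int.one_le_abs hS0ne
    have h2 : (0:ℤ) ≤ |A0| ^ ν * |B0| := mul_nonneg (pow_nonneg (abs_nonneg _) _) (abs_nonneg _)
    nlinarith
  -- algNormAbs values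
  have haval : algNormAbs ξ = |((A0 : ℝ))| := by
    rw [algNormAbs, algNormAbs_eq_abs_coeff_zero ξ hξintQ, hAQ, coeff_map]
    push_cast
    norm_num
    rfl
  have hβc : (β : ℂ) = algebraMap ℝ ℂ β := rfl
  have hbceq : minpoly ℚ ((β : ℂ)) = minpoly ℚ β := by
    rw [hβc, minpoly.algebraMap_eq (algebraMap ℝ ℂ).injective]
  have hβintQC : IsIntegral ℚ ((β : ℂ)) := by
    rw [hβc]
    exact hβintQ.map (IsScalarTower.toAlgHom ℚ ℝ ℂ)
  have hbval : algNormAbs ((β : ℂ)) = |((B0 : ℝ))| := by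
    rw [algNormAbs, algNormAbs_eq_abs_coeff_zero _ hβintQC, hbceq, hBQ, coeff_map]
    push_cast
    norm_num
    rfl
  -- real estimates
  set a : ℝ := |((A0 : ℝ))| with ha
  set b : ℝ := |((B0 : ℝ))| with hb
  have ha2 : (2:ℝ) ≤ a := haval ▸ hnotunit
  have hb1 : (1:ℝ) ≤ b := by
    rw [hb]
    have : (1:ℤ) ≤ |B0| := Int.one_le_abs hB0ne
    calc (1:ℝ) = ((1:ℤ):ℝ) := by norm_num
    _ ≤ ((|B0|:ℤ):ℝ) := by exact_mod_cast this
    _ = |((B0:ℝ))| := by push_cast; ring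
  have hHcoeff : |((P.coeff 0 : ℝ))| ≤ polyHeight P := by
    rw [polyHeight]
    exact Finset.le_sup' (fun j => |((P.coeff j : ℝ))|)
      (Finset.mem_range.mpr (Nat.succ_pos _))
  have hprod : a ^ ν * b ≤ polyHeight P := by
    refine le_trans ?_ hHcoeff
    calc a ^ ν * b = ((|A0| ^ ν * |B0| : ℤ) : ℝ) := by push_cast; ring
    _ ≤ ((|P.coeff 0| : ℤ) : ℝ) := by exact_mod_cast keyZ
    _ = |((P.coeff 0 : ℝ))| := by push_cast; ring
  have hlog2 : (0:ℝ) < Real.log 2 := Real.log_pos one_lt_two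
  rw [hbval]
  rw [one_div, inv_mul_eq_div, le_div_iff₀ hlog2]
  have hapos : (0:ℝ) < a := lt_of_lt_of_le two_pos ha2
  have hbpos : (0:ℝ) < b := lt_of_lt_of_le one_pos hb1
  have h1 : (ν:ℝ) * Real.log 2 ≤ (ν:ℝ) * Real.log a :=
    mul_le_mul_of_nonneg_left (Real.log_le_log two_pos ha2) (Nat.cast_nonneg ν)
  have h2 : (ν:ℝ) * Real.log a + Real.log b = Real.log (a ^ ν * b) := by
    rw [Real.log_mul (by positivity) (by positivity), Real.log_pow]
  have h3 : Real.log (a ^ ν * b) ≤ Real.log (polyHeight P) :=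
    Real.log_le_log (by positivity) hprod
  linarith

/-- If `ξ` is a beta-conjugate of the Parry number `β` which is not an algebraic unit
(`|N(ξ)| ≥ 2`), its multiplicity `ν_ξ` as a root of the Parry polynomial `n*_β` satisfies
`ν_ξ ≤ (1/Log 2)·(Log H(n*_β) - Log |N(β)|)`. -/
theorem betaConjugate_multiplicity_bound (β : ℝ) (P : Polynomial ℤ)
    (hP : IsParryPolyOf β P) (ξ : ℂ) (hroot : (P.map (Int.castRingHom ℂ)).IsRoot ξ)
    (hnotconj : (Polynomial.aeval ξ) (minpoly ℚ β) ≠ 0)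
    (hnotunit : 2 ≤ algNormAbs ξ) :
    ((Polynomial.rootMultiplicity ξ (P.map (Int.castRingHom ℂ))) : ℝ) ≤
      (1 / Real.log 2) * (Real.log (polyHeight P) - Real.log (algNormAbs (β : ℂ))) := by
  obtain ⟨hβ1, hnotint, hcase⟩ := hP
  have hβ0 : (0:ℝ) < β := lt_trans one_pos hβ1
  rcases hcase with ⟨m, hm, htm, h0, rfl⟩ | ⟨hinf, m, p, hper, hpmin, hmmin, rfl⟩
  · -- simple case
    apply master β _ hβ1 (monic_simpleParryPoly β m hm) ?_ ?_ ξ hroot hnotconj hnotunit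
    · rw [aeval_simpleParryPoly, Titer_simple_eq_zero hβ1 m hm h0]
    · rw [coeff_zero_simple β m hm]
      exact neg_ne_zero.mpr htm
  · -- non-simple case
    apply master β _ hβ1 (monic_nonsimpleParryPoly β m p) ?_ ?_ ξ hroot hnotconj hnotunit
    · rw [aeval_nonsimpleParryPoly, Titer_nonsimple_eq hβ1 m p hper, sub_self]
    · rcases Nat.eq_zero_or_pos m with rfl | hm
      · rw [coeff_zero_nonsimple_zero]
        have := tdigit_nonneg hβ0 (p + 1)
        omega
      · rw [coeff_zero_nonsimple_pos β m p hm]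
        intro h
        have heq : tdigit β (m + p + 1) = tdigit β m := by omega
        apply hmmin (m - 1) (by omega)
        intro i hi
        rcases eq_or_lt_of_le hi with rfl | hlt
        · have e : m - 1 + 1 = m := by omega
          rw [e, show m + (p + 1) = m + p + 1 by omega, heq]
        · exact hper i (by omega)

end
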